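/- arXiv:2004.01514 — 2 statements merged into one kernel-verified Lean document; each statement's English description precedes it below -/
import Mathlib

section
/- Among the pairs (m,n) ∈ {(1,1),(1,2),(1,7),(3,5),(7,10),(30,36),(715,806),(7476,7567)} with m+n > 8, the pair (715,806) is the unique one for which the diagonal matrix A with m entries −1/2 and n entries 1/2 satisfies σ₁(A) > 0, σ₂(A) > 0, and σ₃(A) > 0 simultaneously. -/
/-!
Splitting the diagonal into its `m` entries `-1/2` and `n` entries `1/2` gives
`σ_k(A) = ∑_{i+j=k} C(m,i) C(n,j) (-1/2)^i (1/2)^j`. With `d = n - m` and `s = m + n` this is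
`2σ₁ = d`, `8σ₂ = d² - s` and `48σ₃ = d (d² - 3s + 2)`, so the three conditions read
`d > 0`, `d² > s`, `d² + 2 > 3s`. Among the listed pairs with `s > 8` only `(715, 806)`,
with `d = 91` and `s = 1521`, passes.
-/

open Finset

/-- k-th elementary symmetric polynomial of the diagonal entries of a
diagonal matrix, represented by its vector of diagonal entries. -/
def esymm {d : ℕ} (k : ℕ) (B : Fin d → ℝ) : ℝ :=
  ∑ s ∈ Finset.powersetCard k (Finset.univ : Finset (Fin d)), ∏ i ∈ s, B i

/-- Polarized elementary symmetric function σ_{k,ℓ}(B,C):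
(1/k!) times the sum over k-tuples of pairwise distinct indices of the product
of ℓ diagonal entries of B and k-ℓ diagonal entries of C. -/
noncomputable def sigmaPol (k ℓ : ℕ) {d : ℕ} (B C : Fin d → ℝ) : ℝ :=
  ((Nat.factorial k : ℝ))⁻¹ *
    ∑ f ∈ Finset.univ.filter (fun f : Fin k → Fin d => Function.Injective f),
      ∏ j : Fin k, (if (j : ℕ) < ℓ then B (f j) else C (f j))

/-- Polarized Newton tensor T_{k,ℓ}(B,C) at diagonal index i. -/
noncomputable def TPol (k ℓ : ℕ) {d : ℕ} (B C : Fin d → ℝ) (i : Fin d) : ℝ :=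
  ((Nat.factorial k : ℝ))⁻¹ *
    ∑ f ∈ Finset.univ.filter
        (fun f : Fin k → Fin d => Function.Injective f ∧ ∀ j, f j ≠ i),
      ∏ j : Fin k, (if (j : ℕ) < ℓ then B (f j) else C (f j))

/-- Newton tensor T_k(B) at diagonal index i, for a diagonal matrix B. -/
noncomputable def newton (k : ℕ) {d : ℕ} (B : Fin d → ℝ) (i : Fin d) : ℝ :=
  TPol k k B B i

namespace Multiset

variable {R : Type*} [CommSemiring R]

theorem esymm_zero_right (s : Multiset R) : s.esymm 0 = 1 := by
  simp [esymm]

theorem esymm_zero_left_succ (k : ℕ) : (0 : Multiset R).esymm (k + 1) = 0 := by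
  simp [esymm, powersetCard_zero_right]

theorem esymm_cons_succ (a : R) (s : Multiset R) (k : ℕ) :
    (a ::ₘ s).esymm (k + 1) = s.esymm (k + 1) + a * s.esymm k := by
  simp [esymm, powersetCard_cons, map_map, sum_map_mul_left]

theorem esymm_add (s t : Multiset R) (k : ℕ) :
    (s + t).esymm k = ∑ p ∈ HasAntidiagonal.antidiagonal k, s.esymm p.1 * t.esymm p.2 := by
  induction s using Multiset.induction generalizing k with
  | empty =>
    cases k with
    | zero => simp [esymm_zero_right]
    | succ k => simp [Finset.Nat.sum_antidiagonal_succ, esymm_zero_left_succ, esymm_zero_right]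
  | cons a s ih =>
    cases k with
    | zero => simp [esymm_zero_right]
    | succ k =>
      simp only [cons_add, esymm_cons_succ, ih, Finset.Nat.sum_antidiagonal_succ, add_mul,
        Finset.sum_add_distrib, Finset.mul_sum, esymm_zero_right, mul_assoc, add_assoc]

theorem esymm_replicate (n k : ℕ) (b : R) :
    (replicate n b).esymm k = n.choose k * b ^ k := by
  induction n generalizing k with
  | zero => cases k <;> simp [esymm_zero_right, esymm_zero_left_succ]
  | succ n ih =>
    cases k with
    | zero => simp [esymm_zero_right]
    | succ k =>
      rw [replicate_succ, esymm_cons_succ, ih, ih, Nat.choose_succ_succ']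
      push_cast; ring

end Multiset

theorem esymm_ite_lt (m n k : ℕ) (a b : ℝ) :
    esymm k (fun i : Fin (m + n) => if (i : ℕ) < m then a else b) =
      ∑ p ∈ antidiagonal k, (m.choose p.1 * a ^ p.1) * (n.choose p.2 * b ^ p.2) := by
  have hmap : univ.val.map (fun i : Fin (m + n) => if (i : ℕ) < m then a else b) =
      Multiset.replicate m a + Multiset.replicate n b := by
    rw [Fin.univ_val_map, List.ofFn_add]
    simp [← Multiset.coe_add, Multiset.coe_replicate]
  rw [esymm, ← Finset.esymm_map_val, hmap, Multiset.esymm_add]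
  simp only [Multiset.esymm_replicate]

theorem esymm_one_halfSigns (m n : ℕ) :
    esymm 1 (fun i : Fin (m + n) => if (i : ℕ) < m then (-1/2 : ℝ) else 1/2) =
      ((n : ℝ) - m) / 2 := by
  rw [esymm_ite_lt]
  simp [Finset.Nat.sum_antidiagonal_succ]
  ring

theorem esymm_two_halfSigns (m n : ℕ) :
    esymm 2 (fun i : Fin (m + n) => if (i : ℕ) < m then (-1/2 : ℝ) else 1/2) =
      (((n : ℝ) - m) ^ 2 - (m + n)) / 8 := by
  rw [esymm_ite_lt]
  simp [Finset.Nat.sum_antidiagonal_succ, Nat.cast_choose_two]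
  ring

theorem esymm_three_halfSigns (m n : ℕ) :
    esymm 3 (fun i : Fin (m + n) => if (i : ℕ) < m then (-1/2 : ℝ) else 1/2) =
      ((n : ℝ) - m) * (((n : ℝ) - m) ^ 2 - 3 * (m + n) + 2) / 48 := by
  rw [esymm_ite_lt]
  simp [Finset.Nat.sum_antidiagonal_succ, Nat.cast_choose_eq_descPochhammer_div,
    descPochhammer_succ_right, Nat.factorial]
  ring

theorem esymm_halfSigns_pos_iff (m n : ℕ) :
    (0 < esymm 1 (fun i : Fin (m + n) => if (i : ℕ) < m then (-1/2 : ℝ) else 1/2) ∧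
     0 < esymm 2 (fun i : Fin (m + n) => if (i : ℕ) < m then (-1/2 : ℝ) else 1/2) ∧
     0 < esymm 3 (fun i : Fin (m + n) => if (i : ℕ) < m then (-1/2 : ℝ) else 1/2)) ↔
      (m : ℝ) < n ∧ (m + n : ℝ) < (n - m) ^ 2 ∧ 3 * (m + n : ℝ) < (n - m) ^ 2 + 2 := by
  rw [esymm_one_halfSigns, esymm_two_halfSigns, esymm_three_halfSigns]
  simp only [div_pos_iff_of_pos_right (by norm_num : (0 : ℝ) < 2),
    div_pos_iff_of_pos_right (by norm_num : (0 : ℝ) < 8),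
    div_pos_iff_of_pos_right (by norm_num : (0 : ℝ) < 48), sub_pos]
  refine and_congr_right fun hmn => ?_
  rw [mul_pos_iff_of_pos_left (sub_pos.2 hmn)]
  constructor <;> rintro ⟨h2, h3⟩ <;> constructor <;> linarith

/-- Among the σ₄ = 0 pairs with m + n > 8, only (715,806) satisfies the
ellipticity conditions σ₁ > 0, σ₂ > 0, σ₃ > 0. -/
theorem stmt18 (m n : ℕ)
    (hmem : (m, n) ∈ [(1,1), (1,2), (1,7), (3,5), (7,10), (30,36), (715,806),
      (7476,7567)])
    (hdim : 8 < m + n) :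
    (0 < esymm 1 (fun i : Fin (m + n) =>
        if (i : ℕ) < m then (-1/2 : ℝ) else 1/2) ∧
     0 < esymm 2 (fun i : Fin (m + n) =>
        if (i : ℕ) < m then (-1/2 : ℝ) else 1/2) ∧
     0 < esymm 3 (fun i : Fin (m + n) =>
        if (i : ℕ) < m then (-1/2 : ℝ) else 1/2)) ↔
      (m, n) = (715, 806) := by
  rw [esymm_halfSigns_pos_iff]
  simp only [List.mem_cons, List.not_mem_nil, or_false, Prod.mk.injEq] at hmem
  rcases hmem with ⟨rfl, rfl⟩ | ⟨rfl, rfl⟩ | ⟨rfl, rfl⟩ | ⟨rfl, rfl⟩ | ⟨rfl, rfl⟩ |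
    ⟨rfl, rfl⟩ | ⟨rfl, rfl⟩ | ⟨rfl, rfl⟩ <;> norm_num at *
end

section
/- Let A be the diagonal matrix with m entries −1/2 and n entries 1/2 where (m,n) = (715,806), and define the Newton tensor T₃(A)ᵢ = (1/3!) Σ_{i,i₁,i₂,i₃ distinct} A(i₁)A(i₂)A(i₃). Then for i in the block where A = 1/2, T₃(A)ᵢ = (483/52)·715, and for i in the block where A = −1/2, T₃(A)ᵢ = (483/52)·806; moreover both values are positive, so T₃(A) > 0. -/
open Finset

private lemma triple_sum {d : ℕ} (T : Finset (Fin d)) (B : Fin d → ℝ) :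
    ∑ x ∈ T, ∑ y ∈ T.erase x, ∑ z ∈ (T.erase x).erase y, B x * B y * B z
      = (∑ x ∈ T, B x)^3 - 3*(∑ x ∈ T, B x)*(∑ x ∈ T, (B x)^2)
        + 2*(∑ x ∈ T, (B x)^3) := by
  set P := ∑ x ∈ T, B x with hP
  set Q := ∑ x ∈ T, (B x)^2 with hQ
  set R := ∑ x ∈ T, (B x)^3 with hR
  have step1 : ∀ x ∈ T,
      ∑ y ∈ T.erase x, ∑ z ∈ (T.erase x).erase y, B x * B y * B z
        = (P^2 - Q) * B x - (2*P) * (B x)^2 + 2 * (B x)^3 := by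
    intro x hx
    have inner : ∀ y ∈ T.erase x,
        ∑ z ∈ (T.erase x).erase y, B x * B y * B z
          = (B x * (P - B x)) * B y - B x * (B y)^2 := by
      intro y hy
      rw [← Finset.mul_sum, Finset.sum_erase_eq_sub hy, Finset.sum_erase_eq_sub hx, ← hP]
      ring
    rw [Finset.sum_congr rfl inner, Finset.sum_sub_distrib, ← Finset.mul_sum,
      ← Finset.mul_sum, Finset.sum_erase_eq_sub hx, Finset.sum_erase_eq_sub hx, ← hP, ← hQ]
    ring
  rw [Finset.sum_congr rfl step1, Finset.sum_add_distrib, Finset.sum_sub_distrib,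
    ← Finset.mul_sum, ← Finset.mul_sum, ← Finset.mul_sum, ← hP, ← hQ, ← hR]
  ring

private lemma newton_eq {d : ℕ} (B : Fin d → ℝ) (i : Fin d) :
    newton 3 B i = (6:ℝ)⁻¹ * ((∑ x ∈ univ.erase i, B x)^3
      - 3*(∑ x ∈ univ.erase i, B x)*(∑ x ∈ univ.erase i, (B x)^2)
      + 2*(∑ x ∈ univ.erase i, (B x)^3)) := by
  have hfact : ((Nat.factorial 3 : ℕ) : ℝ) = 6 := by norm_num [Nat.factorial]
  rw [newton, TPol, hfact, ← triple_sum]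
  congr 1
  -- step A: function sum = triple filter sum
  have hA : ∑ f ∈ Finset.univ.filter
        (fun f : Fin 3 → Fin d => Function.Injective f ∧ ∀ j, f j ≠ i),
      ∏ j : Fin 3, (if (j : ℕ) < 3 then B (f j) else B (f j))
      = ∑ p ∈ Finset.univ.filter
          (fun p : Fin d × Fin d × Fin d =>
            p.1 ≠ i ∧ (p.2.1 ≠ p.1 ∧ p.2.1 ≠ i) ∧
              (p.2.2 ≠ p.2.1 ∧ p.2.2 ≠ p.1 ∧ p.2.2 ≠ i)),
        B p.1 * B p.2.1 * B p.2.2 := by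
    refine Finset.sum_nbij' (fun f => (f 0, f 1, f 2))
      (fun p => ![p.1, p.2.1, p.2.2]) ?_ ?_ ?_ ?_ ?_
    · intro f hf
      simp only [Finset.mem_filter, Finset.mem_univ, true_and] at hf ⊢
      obtain ⟨hinj, havoid⟩ := hf
      refine ⟨havoid 0, ⟨fun h => ?_, havoid 1⟩, fun h => ?_, fun h => ?_, havoid 2⟩
      · exact absurd (hinj h) (by decide)
      · exact absurd (hinj h) (by decide)
      · exact absurd (hinj h) (by decide)
    · intro p hp
      simp only [Finset.mem_filter, Finset.mem_univ, true_and] at hp ⊢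
      obtain ⟨h1, ⟨h2, h3⟩, h4, h5, h6⟩ := hp
      constructor
      · intro a b hab
        fin_cases a <;> fin_cases b <;> simp_all
      · intro j
        fin_cases j <;> simp_all
    · intro f _
      funext j
      fin_cases j <;> simp
    · intro p _
      simp
    · intro f _
      simp only [ite_self]
      rw [Fin.prod_univ_three]
  rw [hA]
  -- step B: triple filter sum = nested erase sums
  have e1 : ∀ (s : Finset (Fin d)) (g : Fin d → ℝ),
      ∑ x ∈ s, g x = ∑ x : Fin d, if x ∈ s then g x else 0 := by
    intro s g
    rw [Finset.sum_ite_mem, Finset.univ_inter]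
  have hinner : ∀ x : Fin d, (∑ y : Fin d, ∑ z : Fin d,
      if x ≠ i ∧ (y ≠ x ∧ y ≠ i) ∧ (z ≠ y ∧ z ≠ x ∧ z ≠ i)
        then B x * B y * B z else 0)
      = if x ∈ univ.erase i then
          (∑ y ∈ (univ.erase i).erase x, ∑ z ∈ ((univ.erase i).erase x).erase y,
            B x * B y * B z) else 0 := by
    intro x
    by_cases hx : x = i
    · simp [hx]
    · rw [if_pos (by simp [hx]), e1 ((univ.erase i).erase x)]
      refine Finset.sum_congr rfl fun y _ => ?_
      by_cases hy : y ≠ x ∧ y ≠ i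
      · rw [if_pos (by simp [Finset.mem_erase, hy.1, hy.2]),
          e1 (((univ.erase i).erase x).erase y)]
        refine Finset.sum_congr rfl fun z _ => ?_
        simp only [Finset.mem_erase, Finset.mem_univ, and_true]
        exact if_congr (by tauto) rfl rfl
      · rw [if_neg (by simp only [Finset.mem_erase, Finset.mem_univ, and_true]; tauto)]
        exact Finset.sum_eq_zero fun z _ => if_neg (by tauto)
  rw [e1 (univ.erase i)]
  rw [Finset.sum_filter]
  rw [Fintype.sum_prod_type]
  refine Finset.sum_congr rfl fun x _ => ?_
  rw [← hinner x, Fintype.sum_prod_type]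

private lemma newton_value {d : ℕ} (B : Fin d → ℝ) (i : Fin d)
    (hsq : ∀ x, (B x)^2 = 1/4) (S : ℝ) (hS : ∑ x : Fin d, B x = S) :
    newton 3 B i = (6:ℝ)⁻¹ * ((S - B i)^3
      - 3*(S - B i)*(((d:ℝ)-1)/4) + 2*((1/4)*(S - B i))) := by
  have hcube : ∀ x, (B x)^3 = (1/4) * B x := by
    intro x
    rw [pow_succ, hsq x]
  have hPi : ∑ x ∈ univ.erase i, B x = S - B i := by
    rw [Finset.sum_erase_eq_sub (Finset.mem_univ i), hS]
  have hQi : ∑ x ∈ univ.erase i, (B x)^2 = ((d:ℝ)-1)/4 := by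
    rw [Finset.sum_congr rfl fun x _ => hsq x, Finset.sum_const,
      Finset.card_erase_of_mem (Finset.mem_univ i), Finset.card_univ, Fintype.card_fin,
      nsmul_eq_mul, Nat.cast_sub (Nat.one_le_iff_ne_zero.mpr (by rintro rfl; exact i.elim0))]
    push_cast
    ring
  have hRi : ∑ x ∈ univ.erase i, (B x)^3 = (1/4) * (S - B i) := by
    rw [Finset.sum_congr rfl fun x _ => hcube x, ← Finset.mul_sum, hPi]
  rw [newton_eq, hPi, hQi, hRi]

/-- The values of T₃ on the two blocks for (m,n) = (715,806), and their
positivity. -/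
theorem stmt19 :
    (∀ i : Fin (715 + 806), 715 ≤ (i : ℕ) →
      newton 3 (fun i : Fin (715 + 806) =>
        if (i : ℕ) < 715 then (-1/2 : ℝ) else 1/2) i = (483 / 52) * 715) ∧
    (∀ i : Fin (715 + 806), (i : ℕ) < 715 →
      newton 3 (fun i : Fin (715 + 806) =>
        if (i : ℕ) < 715 then (-1/2 : ℝ) else 1/2) i = (483 / 52) * 806) ∧
    (0 : ℝ) < (483 / 52) * 715 ∧ (0 : ℝ) < (483 / 52) * 806 := by
  have hsq : ∀ x : Fin (715 + 806),
      ((fun i : Fin (715 + 806) => if (i : ℕ) < 715 then (-1/2 : ℝ) else 1/2) x)^2 = 1/4 := by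
    intro x
    simp only []
    split_ifs <;> norm_num
  have htot : ∑ x : Fin (715 + 806),
      (fun i : Fin (715 + 806) => if (i : ℕ) < 715 then (-1/2 : ℝ) else 1/2) x = 91/2 := by
    rw [Fin.sum_univ_add]
    simp only [Fin.coe_castAdd, Fin.coe_natAdd]
    rw [Finset.sum_congr rfl fun (x : Fin 715) _ => if_pos x.isLt,
      Finset.sum_congr rfl fun (x : Fin 806) _ => if_neg (by omega)]
    simp only [Finset.sum_const, Finset.card_univ, Fintype.card_fin, nsmul_eq_mul]
    norm_num
  refine ⟨fun i hi => ?_, fun i hi => ?_, by norm_num, by norm_num⟩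
  · rw [newton_value _ i hsq _ htot]
    have hBi : ¬ ((i : ℕ) < 715) := by omega
    simp only [hBi, if_false]
    norm_num
  · rw [newton_value _ i hsq _ htot]
    simp only [hi, if_true]
    norm_num
end
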